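/- arXiv:1703.01723 — 4 statements merged into one kernel-verified Lean document; each statement's English description precedes it below -/
import Mathlib

section
/- Let σ, τ : ℝ³ → ℂ be smooth functions of the variables (x, s, t) with τ nowhere vanishing, and set q = σ/τ and V = (∂_x τ)/τ. Then the pointwise identity ∂_t q − (i/2)·∂_x∂_s q − i·q·∂_s V = (D_t σ·τ − (i/2)·D_x D_s σ·τ)/τ² holds. Similarly, for smooth ρ : ℝ³ → ℂ with r = ρ/τ, one has ∂_t r + (i/2)·∂_x∂_s r + i·r·∂_s V = (D_t ρ·τ + (i/2)·D_x D_s ρ·τ)/τ². (These identities show that the bilinear AKNS hierarchy equations are equivalent to the nonlinear AKNS hierarchy equations under the substitution q = σ/τ, r = ρ/τ.) -/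
noncomputable section

/-- Partial derivative in the first variable `x` of a function on `ℝ³ = ℝ × ℝ × ℝ`. -/
def pX (f : ℝ × ℝ × ℝ → ℂ) : ℝ × ℝ × ℝ → ℂ :=
  fun p => deriv (fun x => f (x, p.2)) p.1

/-- Partial derivative in the second variable `s`. -/
def pS (f : ℝ × ℝ × ℝ → ℂ) : ℝ × ℝ × ℝ → ℂ :=
  fun p => deriv (fun s => f (p.1, s, p.2.2)) p.2.1

/-- Partial derivative in the third variable `t`. -/
def pT (f : ℝ × ℝ × ℝ → ℂ) : ℝ × ℝ × ℝ → ℂ :=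
  fun p => deriv (fun t => f (p.1, p.2.1, t)) p.2.2

/-- Hirota bilinear operator `D_t a·b = a_t b − a b_t`. -/
def HDt (a b : ℝ × ℝ × ℝ → ℂ) : ℝ × ℝ × ℝ → ℂ :=
  fun p => pT a p * b p - a p * pT b p

/-- Hirota bilinear operator `D_x D_s a·b = a_{xs} b − a_x b_s − a_s b_x + a b_{xs}`. -/
def HDxDs (a b : ℝ × ℝ × ℝ → ℂ) : ℝ × ℝ × ℝ → ℂ :=
  fun p => pX (pS a) p * b p - pX a p * pS b p - pS a p * pX b p + a p * pX (pS b) p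

/-! ### Auxiliary development -/

/-- Directional derivative via `fderiv`. -/
def pd (e : ℝ × ℝ × ℝ) (f : ℝ × ℝ × ℝ → ℂ) : ℝ × ℝ × ℝ → ℂ := fun p => fderiv ℝ f p e

lemma pd_contDiff (e : ℝ × ℝ × ℝ) {f : ℝ × ℝ × ℝ → ℂ} (hf : ContDiff ℝ (⊤ : ℕ∞) f) :
    ContDiff ℝ (⊤ : ℕ∞) (pd e f) := (hf.fderiv_right (by simp)).clm_apply contDiff_const

lemma pX_eq {f : ℝ × ℝ × ℝ → ℂ} (hf : ContDiff ℝ (⊤ : ℕ∞) f) : pX f = pd (1, 0, 0) f := by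
  funext p
  have hL : HasDerivAt (fun x : ℝ => ((x, p.2) : ℝ × ℝ × ℝ)) (1, 0, 0) p.1 :=
    (hasDerivAt_id p.1).prodMk (hasDerivAt_const _ _)
  have h := ((hf.differentiable (by simp)) (p.1, p.2)).hasFDerivAt.comp_hasDerivAt p.1 hL
  simpa [pX, pd, Function.comp_def] using h.deriv

lemma pS_eq {f : ℝ × ℝ × ℝ → ℂ} (hf : ContDiff ℝ (⊤ : ℕ∞) f) : pS f = pd (0, 1, 0) f := by
  funext p
  have hL : HasDerivAt (fun s : ℝ => ((p.1, s, p.2.2) : ℝ × ℝ × ℝ)) (0, 1, 0) p.2.1 :=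
    (hasDerivAt_const _ _).prodMk ((hasDerivAt_id _).prodMk (hasDerivAt_const _ _))
  have h := ((hf.differentiable (by simp)) (p.1, p.2.1, p.2.2)).hasFDerivAt.comp_hasDerivAt p.2.1 hL
  simpa [pS, pd, Function.comp_def] using h.deriv

lemma pX_smooth {f : ℝ × ℝ × ℝ → ℂ} (hf : ContDiff ℝ (⊤ : ℕ∞) f) : ContDiff ℝ (⊤ : ℕ∞) (pX f) := by
  rw [pX_eq hf]; exact pd_contDiff _ hf

lemma pS_smooth {f : ℝ × ℝ × ℝ → ℂ} (hf : ContDiff ℝ (⊤ : ℕ∞) f) : ContDiff ℝ (⊤ : ℕ∞) (pS f) := by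
  rw [pS_eq hf]; exact pd_contDiff _ hf

lemma pd_pd (e e' : ℝ × ℝ × ℝ) {f : ℝ × ℝ × ℝ → ℂ} (hf : ContDiff ℝ (⊤ : ℕ∞) f) (p : ℝ × ℝ × ℝ) :
    pd e (pd e' f) p = fderiv ℝ (fderiv ℝ f) p e e' := by
  have hd2 : HasFDerivAt (fderiv ℝ f) (fderiv ℝ (fderiv ℝ f) p) p :=
    (((hf.fderiv_right (m := (⊤ : ℕ∞)) (by simp)).differentiable (by simp)) p).hasFDerivAt
  have h2 := ((ContinuousLinearMap.apply ℝ ℂ e').hasFDerivAt.comp p hd2).fderiv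
  simp only [pd]
  calc fderiv ℝ (fun q => fderiv ℝ f q e') p e
      = fderiv ℝ ((ContinuousLinearMap.apply ℝ ℂ e') ∘ fderiv ℝ f) p e := rfl
    _ = ((ContinuousLinearMap.apply ℝ ℂ e').comp (fderiv ℝ (fderiv ℝ f) p)) e := by rw [h2]
    _ = fderiv ℝ (fderiv ℝ f) p e e' := rfl

lemma clairaut {f : ℝ × ℝ × ℝ → ℂ} (hf : ContDiff ℝ (⊤ : ℕ∞) f) : pS (pX f) = pX (pS f) := by
  rw [pX_eq hf, pS_eq hf, pS_eq (pd_contDiff _ hf), pX_eq (pd_contDiff _ hf)]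
  funext p
  rw [pd_pd _ _ hf p, pd_pd _ _ hf p]
  exact second_derivative_symmetric
    (fun y => ((hf.differentiable (by simp)) y).hasFDerivAt)
    ((((hf.fderiv_right (m := (⊤ : ℕ∞)) (by simp)).differentiable (by simp)) p).hasFDerivAt) _ _

lemma diffX {f : ℝ × ℝ × ℝ → ℂ} (hf : ContDiff ℝ (⊤ : ℕ∞) f) (c : ℝ × ℝ) (x : ℝ) :
    DifferentiableAt ℝ (fun x => f (x, c)) x :=
  ((hf.differentiable (by simp)) (x, c)).comp x (differentiableAt_id.prodMk (differentiableAt_const c))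

lemma diffS {f : ℝ × ℝ × ℝ → ℂ} (hf : ContDiff ℝ (⊤ : ℕ∞) f) (a b s : ℝ) :
    DifferentiableAt ℝ (fun s => f (a, s, b)) s :=
  ((hf.differentiable (by simp)) (a, s, b)).comp s
    ((differentiableAt_const a).prodMk (differentiableAt_id.prodMk (differentiableAt_const b)))

lemma diffT {f : ℝ × ℝ × ℝ → ℂ} (hf : ContDiff ℝ (⊤ : ℕ∞) f) (a b t : ℝ) :
    DifferentiableAt ℝ (fun t => f (a, b, t)) t :=
  ((hf.differentiable (by simp)) (a, b, t)).comp t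
    ((differentiableAt_const a).prodMk ((differentiableAt_const b).prodMk differentiableAt_id))

lemma pX_div {f g : ℝ × ℝ × ℝ → ℂ} (hf : ContDiff ℝ (⊤ : ℕ∞) f) (hg : ContDiff ℝ (⊤ : ℕ∞) g)
    (hg0 : ∀ p, g p ≠ 0) :
    pX (fun p => f p / g p) = fun p => (pX f p * g p - f p * pX g p) / (g p) ^ 2 := by
  funext p
  simp only [pX]
  rw [deriv_fun_div (diffX hf p.2 p.1) (diffX hg p.2 p.1) (hg0 (p.1, p.2))]

lemma pS_div {f g : ℝ × ℝ × ℝ → ℂ} (hf : ContDiff ℝ (⊤ : ℕ∞) f) (hg : ContDiff ℝ (⊤ : ℕ∞) g)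
    (hg0 : ∀ p, g p ≠ 0) :
    pS (fun p => f p / g p) = fun p => (pS f p * g p - f p * pS g p) / (g p) ^ 2 := by
  funext p
  simp only [pS]
  rw [deriv_fun_div (diffS hf p.1 p.2.2 p.2.1) (diffS hg p.1 p.2.2 p.2.1) (hg0 (p.1, p.2.1, p.2.2))]

lemma pT_div {f g : ℝ × ℝ × ℝ → ℂ} (hf : ContDiff ℝ (⊤ : ℕ∞) f) (hg : ContDiff ℝ (⊤ : ℕ∞) g)
    (hg0 : ∀ p, g p ≠ 0) :
    pT (fun p => f p / g p) = fun p => (pT f p * g p - f p * pT g p) / (g p) ^ 2 := by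
  funext p
  simp only [pT]
  rw [deriv_fun_div (diffT hf p.1 p.2.1 p.2.2) (diffT hg p.1 p.2.1 p.2.2) (hg0 (p.1, p.2.1, p.2.2))]

lemma pX_mul {f g : ℝ × ℝ × ℝ → ℂ} (hf : ContDiff ℝ (⊤ : ℕ∞) f) (hg : ContDiff ℝ (⊤ : ℕ∞) g) :
    pX (fun p => f p * g p) = fun p => pX f p * g p + f p * pX g p := by
  funext p
  simp only [pX]
  rw [deriv_fun_mul (diffX hf p.2 p.1) (diffX hg p.2 p.1)]

lemma pX_sub {f g : ℝ × ℝ × ℝ → ℂ} (hf : ContDiff ℝ (⊤ : ℕ∞) f) (hg : ContDiff ℝ (⊤ : ℕ∞) g) :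
    pX (fun p => f p - g p) = fun p => pX f p - pX g p := by
  funext p
  simp only [pX]
  rw [deriv_fun_sub (diffX hf p.2 p.1) (diffX hg p.2 p.1)]

lemma pX_sq {g : ℝ × ℝ × ℝ → ℂ} (hg : ContDiff ℝ (⊤ : ℕ∞) g) :
    pX (fun p => (g p) ^ 2) = fun p => 2 * g p * pX g p := by
  have h : (fun p : ℝ × ℝ × ℝ => (g p) ^ 2) = fun p => g p * g p := by funext q; ring
  rw [h, pX_mul hg hg]
  funext p; ring

lemma key {σ τ : ℝ × ℝ × ℝ → ℂ} (hσ : ContDiff ℝ (⊤ : ℕ∞) σ) (hτ : ContDiff ℝ (⊤ : ℕ∞) τ)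
    (hτ0 : ∀ p, τ p ≠ 0) (c : ℂ) (p : ℝ × ℝ × ℝ) :
    pT (fun p => σ p / τ p) p + c * pX (pS (fun p => σ p / τ p)) p
      + 2 * c * ((σ p / τ p) * pS (fun p => pX τ p / τ p) p)
    = (HDt σ τ p + c * HDxDs σ τ p) / (τ p) ^ 2 := by
  have hτ2 : ContDiff ℝ (⊤ : ℕ∞) (fun p => (τ p) ^ 2) := hτ.pow 2
  have hτ20 : ∀ p, (τ p) ^ 2 ≠ 0 := fun p => pow_ne_zero 2 (hτ0 p)
  have hSσ := pS_smooth hσ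
  have hSτ := pS_smooth hτ
  have hXτ := pX_smooth hτ
  have hnum : ContDiff ℝ (⊤ : ℕ∞) (fun p => pS σ p * τ p - σ p * pS τ p) :=
    (hSσ.mul hτ).sub (hσ.mul hSτ)
  have h1 : pT (fun p => σ p / τ p) = fun p => (pT σ p * τ p - σ p * pT τ p) / (τ p) ^ 2 :=
    pT_div hσ hτ hτ0
  have h2 : pS (fun p => σ p / τ p) = fun p => (pS σ p * τ p - σ p * pS τ p) / (τ p) ^ 2 :=
    pS_div hσ hτ hτ0
  have h3 : pX (pS (fun p => σ p / τ p))
      = fun p => ((pX (pS σ) p * τ p + pS σ p * pX τ p - (pX σ p * pS τ p + σ p * pX (pS τ) p))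
            * (τ p) ^ 2
          - (pS σ p * τ p - σ p * pS τ p) * (2 * τ p * pX τ p)) / ((τ p) ^ 2) ^ 2 := by
    rw [h2, pX_div hnum hτ2 hτ20, pX_sub (hSσ.mul hτ) (hσ.mul hSτ), pX_mul hSσ hτ,
      pX_mul hσ hSτ, pX_sq hτ]
  have h4 : pS (fun p => pX τ p / τ p)
      = fun p => (pX (pS τ) p * τ p - pX τ p * pS τ p) / (τ p) ^ 2 := by
    rw [pS_div hXτ hτ hτ0, clairaut hτ]
  rw [h1, h3, h4]
  simp only [HDt, HDxDs]
  field_simp [hτ0 p]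
  ring

theorem stmt_0
    (σ ρ τ : ℝ × ℝ × ℝ → ℂ)
    (hσ : ContDiff ℝ (⊤ : ℕ∞) σ) (hρ : ContDiff ℝ (⊤ : ℕ∞) ρ) (hτ : ContDiff ℝ (⊤ : ℕ∞) τ)
    (hτ0 : ∀ p, τ p ≠ 0)
    (q r V : ℝ × ℝ × ℝ → ℂ)
    (hq : q = fun p => σ p / τ p)
    (hr : r = fun p => ρ p / τ p)
    (hV : V = fun p => pX τ p / τ p) :
    (∀ p, pT q p - (Complex.I / 2) * pX (pS q) p - Complex.I * q p * pS V p
        = (HDt σ τ p - (Complex.I / 2) * HDxDs σ τ p) / (τ p) ^ 2) ∧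
    (∀ p, pT r p + (Complex.I / 2) * pX (pS r) p + Complex.I * r p * pS V p
        = (HDt ρ τ p + (Complex.I / 2) * HDxDs ρ τ p) / (τ p) ^ 2) := by
  subst hq hr hV
  constructor
  · intro p
    have h := key hσ hτ hτ0 (-(Complex.I / 2)) p
    linear_combination h
  · intro p
    have h := key hρ hτ hτ0 (Complex.I / 2) p
    linear_combination h
end
end

section
/- Let f : ℝ → ℝ be smooth and everywhere positive, and set u = 2·(log f)''. Then (D_x⁴ f·f)/f² = u'' + 3u², where D_x⁴ f·f = 2(f·f'''' − 4 f'·f''' + 3 (f'')²). -/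
noncomputable section

theorem stmt_4
    (f : ℝ → ℝ) (hf : ContDiff ℝ (⊤ : ℕ∞) f) (hfpos : ∀ x, 0 < f x)
    (u : ℝ → ℝ) (hu : u = fun x => 2 * deriv (deriv (fun y => Real.log (f y))) x) :
    ∀ x, (2 * (f x * iteratedDeriv 4 f x - 4 * deriv f x * iteratedDeriv 3 f x
        + 3 * (iteratedDeriv 2 f x) ^ 2)) / (f x) ^ 2
      = deriv (deriv u) x + 3 * (u x) ^ 2 := by
  have hc0 : ContDiff ℝ (⊤ : ℕ∞) f := hf.of_le (by simp)
  have hc1 := (contDiff_infty_iff_deriv.mp hc0).2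
  have hc2 := (contDiff_infty_iff_deriv.mp hc1).2
  have hc3 := (contDiff_infty_iff_deriv.mp hc2).2
  have hcd : ∀ g : ℝ → ℝ, ContDiff ℝ (⊤ : ℕ∞) g → Differentiable ℝ g := fun g hg =>
    hg.differentiable (by simp)
  have h0 : Differentiable ℝ f := hcd f hc0
  have h1 : Differentiable ℝ (deriv f) := hcd _ hc1
  have h2 : Differentiable ℝ (deriv (deriv f)) := hcd _ hc2
  have h3 : Differentiable ℝ (deriv (deriv (deriv f))) := hcd _ hc3
  have hg' : deriv (fun y => Real.log (f y)) = fun y => deriv f y / f y :=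
    funext fun y => ((h0 y).hasDerivAt.log (hfpos y).ne').deriv
  have hu2 : u = fun y =>
      2 * ((deriv (deriv f) y * f y - deriv f y * deriv f y) / f y ^ 2) := by
    rw [hu, hg']
    funext y
    rw [HasDerivAt.deriv (f := fun y => deriv f y / f y)
      ((h1 y).hasDerivAt.div (h0 y).hasDerivAt (hfpos y).ne')]
  have hu' : deriv u = fun y =>
      2 * ((deriv (deriv (deriv f)) y * f y ^ 2
        - 3 * f y * deriv f y * deriv (deriv f) y + 2 * deriv f y ^ 3) / f y ^ 3) := by
    funext y
    have hN : HasDerivAt (fun z => deriv (deriv f) z * f z - deriv f z * deriv f z)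
        (deriv (deriv (deriv f)) y * f y + deriv (deriv f) y * deriv f y
          - (deriv (deriv f) y * deriv f y + deriv f y * deriv (deriv f) y)) y :=
      ((h2 y).hasDerivAt.mul (h0 y).hasDerivAt).sub
        ((h1 y).hasDerivAt.mul (h1 y).hasDerivAt)
    have hD : HasDerivAt (fun z => f z ^ 2) ((2 : ℕ) * f y ^ 1 * deriv f y) y :=
      (h0 y).hasDerivAt.pow 2
    have H := ((hN.div hD (pow_ne_zero 2 (hfpos y).ne')).const_mul 2)
    rw [hu2, HasDerivAt.deriv (f := fun y =>
      2 * ((deriv (deriv f) y * f y - deriv f y * deriv f y) / f y ^ 2)) H]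
    have hy : f y ≠ 0 := (hfpos y).ne'
    field_simp
    ring
  intro x
  have i2 : iteratedDeriv 2 f = deriv (deriv f) := by
    rw [iteratedDeriv_succ, iteratedDeriv_one]
  have i3 : iteratedDeriv 3 f = deriv (deriv (deriv f)) := by
    rw [iteratedDeriv_succ, i2]
  have i4 : iteratedDeriv 4 f = deriv (deriv (deriv (deriv f))) := by
    rw [iteratedDeriv_succ, i3]
  have hM : HasDerivAt (fun z => deriv (deriv (deriv f)) z * f z ^ 2
        - 3 * f z * deriv f z * deriv (deriv f) z + 2 * deriv f z ^ 3)
      (deriv (deriv (deriv (deriv f))) x * f x ^ 2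
          + deriv (deriv (deriv f)) x * ((2 : ℕ) * f x ^ 1 * deriv f x)
        - ((3 * deriv f x * deriv f x + 3 * f x * deriv (deriv f) x) * deriv (deriv f) x
          + 3 * f x * deriv f x * deriv (deriv (deriv f)) x)
        + (2 : ℝ) * ((3 : ℕ) * deriv f x ^ 2 * deriv (deriv f) x)) x := by
    exact (((h3 x).hasDerivAt.mul ((h0 x).hasDerivAt.pow 2)).sub
      (((((h0 x).hasDerivAt.const_mul 3).mul (h1 x).hasDerivAt).mul (h2 x).hasDerivAt))).add
      (((h1 x).hasDerivAt.pow 3).const_mul 2)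
  have hD3 : HasDerivAt (fun z => f z ^ 3) ((3 : ℕ) * f x ^ 2 * deriv f x) x :=
    (h0 x).hasDerivAt.pow 3
  have H2 := ((hM.div hD3 (pow_ne_zero 3 (hfpos x).ne')).const_mul 2)
  rw [hu', HasDerivAt.deriv (f := fun y => 2 * ((deriv (deriv (deriv f)) y * f y ^ 2
      - 3 * f y * deriv f y * deriv (deriv f) y + 2 * deriv f y ^ 3) / f y ^ 3)) H2,
    i2, i3, i4, hu2]
  have hx : f x ≠ 0 := (hfpos x).ne'
  field_simp
  ring
end
end

section
/- Let h ∈ ℝ, h ≠ 0, and for each n ∈ ℤ let σ_n, ρ_n, τ_n : ℝ → ℂ be smooth with τ_n nowhere vanishing. Set q_n = σ_n/τ_n, r_n = ρ_n/τ_n, v_n = τ_n'/τ_n. If for all n the discrete bilinear relations hold: D_x τ_n·τ_{n−1} = −h σ_n ρ_{n−1}, D_x σ_n·τ_{n−1} = (σ_n τ_{n−1} − τ_n σ_{n−1})/h, D_x τ_n·ρ_{n−1} = (τ_n ρ_{n−1} − ρ_n τ_{n−1})/h, then for all n: v_n − v_{n−1} = −h q_n r_{n−1}, q_n' = (q_n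 − q_{n−1})/h + h q_n² r_{n−1}, and r_{n−1}' = (r_n − r_{n−1})/h − h q_n r_{n−1}². -/
noncomputable section

/-- Hirota bilinear operator on functions of one real variable:
`D_x a·b = a' b − a b'`. -/
def HDx (a b : ℝ → ℂ) : ℝ → ℂ :=
  fun x => deriv a x * b x - a x * deriv b x

theorem stmt_10
    (h : ℝ) (hh : h ≠ 0)
    (σ ρ τ : ℤ → ℝ → ℂ)
    (hσ : ∀ n, ContDiff ℝ (⊤ : ℕ∞) (σ n)) (hρ : ∀ n, ContDiff ℝ (⊤ : ℕ∞) (ρ n))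
    (hτ : ∀ n, ContDiff ℝ (⊤ : ℕ∞) (τ n)) (hτ0 : ∀ n x, τ n x ≠ 0)
    (q r v : ℤ → ℝ → ℂ)
    (hq : ∀ n, q n = fun x => σ n x / τ n x)
    (hr : ∀ n, r n = fun x => ρ n x / τ n x)
    (hv : ∀ n, v n = fun x => deriv (τ n) x / τ n x)
    (hbil1 : ∀ n x, HDx (τ n) (τ (n - 1)) x = -(h : ℂ) * σ n x * ρ (n - 1) x)
    (hbil2 : ∀ n x, HDx (σ n) (τ (n - 1)) x
        = (σ n x * τ (n - 1) x - τ n x * σ (n - 1) x) / (h : ℂ))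
    (hbil3 : ∀ n x, HDx (τ n) (ρ (n - 1)) x
        = (τ n x * ρ (n - 1) x - ρ n x * τ (n - 1) x) / (h : ℂ)) :
    (∀ n x, v n x - v (n - 1) x = -(h : ℂ) * q n x * r (n - 1) x) ∧
    (∀ n x, deriv (q n) x
        = (q n x - q (n - 1) x) / (h : ℂ) + (h : ℂ) * (q n x) ^ 2 * r (n - 1) x) ∧
    (∀ n x, deriv (r (n - 1)) x
        = (r n x - r (n - 1) x) / (h : ℂ) - (h : ℂ) * q n x * (r (n - 1) x) ^ 2) := by
  have hhc : (h : ℂ) ≠ 0 := by exact_mod_cast hh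
  have dσ : ∀ n x, DifferentiableAt ℝ (σ n) x := fun n x =>
    ((hσ n).differentiable (by simp)).differentiableAt
  have dρ : ∀ n x, DifferentiableAt ℝ (ρ n) x := fun n x =>
    ((hρ n).differentiable (by simp)).differentiableAt
  have dτ : ∀ n x, DifferentiableAt ℝ (τ n) x := fun n x =>
    ((hτ n).differentiable (by simp)).differentiableAt
  refine ⟨?_, ?_, ?_⟩
  · intro n x
    have b1 := hbil1 n x
    simp only [HDx] at b1
    simp only [hv, hq, hr]
    field_simp [hτ0 n x, hτ0 (n - 1) x]
    linear_combination b1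
  · intro n x
    have b1 := hbil1 n x
    have b2 := hbil2 n x
    simp only [HDx] at b1 b2
    have hd : deriv (q n) x
        = (deriv (σ n) x * τ n x - σ n x * deriv (τ n) x) / (τ n x) ^ 2 := by
      rw [hq]
      exact deriv_div (dσ n x) (dτ n x) (hτ0 n x)
    rw [hd]
    simp only [hq, hr]
    field_simp [hτ0 n x, hτ0 (n - 1) x, hhc]
    rw [eq_div_iff hhc] at b2
    linear_combination (τ n x) * b2 - ((h : ℂ) * σ n x) * b1
  · intro n x
    have b1 := hbil1 n x
    have b3 := hbil3 n x
    simp only [HDx] at b1 b3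
    have hd : deriv (r (n - 1)) x
        = (deriv (ρ (n - 1)) x * τ (n - 1) x - ρ (n - 1) x * deriv (τ (n - 1)) x)
          / (τ (n - 1) x) ^ 2 := by
      rw [hr]
      exact deriv_div (dρ (n - 1) x) (dτ (n - 1) x) (hτ0 (n - 1) x)
    rw [hd]
    simp only [hq, hr]
    field_simp [hτ0 n x, hτ0 (n - 1) x, hhc]
    rw [eq_div_iff hhc] at b3
    linear_combination (-(τ (n - 1) x)) * b3 + ((h : ℂ) * ρ (n - 1) x) * b1
end
end

section
/- Let h ∈ ℝ, h ≠ 0, and for each n ∈ ℤ let q_n, r_n, v_n : ℝ³ → ℂ be smooth functions of (x, s, t). Assume for all n: v_n − v_{n−1} = −h q_n r_{n−1}; q_{n,x} = (q_n − q_{n−1})/h + h q_n² r_{n−1}; r_{n,x} = (r_{n+1} − r_n)/h − h q_{n+1} r_n²; and the flow equations q_{n,t} = (i/2)·q_{n,xs} + i·q_n·v_{n,s}, r_{n,t} = −(i/2)·r_{n,xs} − i·r_n·v_{n,s}. Then for all n the discrete recursion relations hold: 2i·q_{n,t} = −(1/h)(q_{n,s} − q_{n−1,s}) − 2h q_n r_{n−1}·q_{n,s}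 − h q_n²·r_{n−1,s} − 2 q_n·v_{n,s}, and 2i·r_{n,t} = (1/h)(r_{n+1,s} − r_{n,s}) − 2h q_{n+1} r_n·r_{n,s} − h r_n²·q_{n+1,s} + 2 r_n·v_{n,s}; moreover v_{n+1,s} − v_{n,s} = −h·∂_s(q_{n+1} r_n), so that −v_{n,s} realizes the inverse difference operator h(E−1)^{−1} applied to ∂_s(q_{n+1} r_n), where E is the shift E f_n = f_{n+1}. (These are the entries of the discrete AKNS recursion operator.) -/
noncomputable section

lemma sliceS_hasDerivAt (f : ℝ × ℝ × ℝ → ℂ) (hf : ContDiff ℝ (⊤ : ℕ∞) f) (p : ℝ × ℝ × ℝ) :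
    HasDerivAt (fun s => f (p.1, s, p.2.2)) (pS f p) p.2.1 := by
  have hdiff : DifferentiableAt ℝ (fun s => f (p.1, s, p.2.2)) p.2.1 := by
    have : (fun s => f (p.1, s, p.2.2)) = f ∘ (fun s : ℝ => (p.1, s, p.2.2)) := rfl
    rw [this]
    exact ((hf.differentiable (by simp)).differentiableAt).comp _
      (((differentiable_const _).prodMk (differentiable_id.prodMk (differentiable_const _))) _)
  exact hdiff.hasDerivAt

lemma pX_eq_fderiv (f : ℝ × ℝ × ℝ → ℂ) (hf : ContDiff ℝ (⊤ : ℕ∞) f) (p : ℝ × ℝ × ℝ) :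
    pX f p = fderiv ℝ f p (1, 0, 0) := by
  have hc : HasDerivAt (fun x : ℝ => (x, p.2)) ((1 : ℝ), ((0 : ℝ), (0 : ℝ))) p.1 :=
    (hasDerivAt_id p.1).prodMk (hasDerivAt_const _ _)
  have := ((hf.differentiable (by simp) p).hasFDerivAt).comp_hasDerivAt p.1 hc
  exact this.deriv

lemma pS_eq_fderiv (f : ℝ × ℝ × ℝ → ℂ) (hf : ContDiff ℝ (⊤ : ℕ∞) f) (p : ℝ × ℝ × ℝ) :
    pS f p = fderiv ℝ f p (0, 1, 0) := by
  have hc : HasDerivAt (fun s : ℝ => (p.1, s, p.2.2)) ((0 : ℝ), ((1 : ℝ), (0 : ℝ))) p.2.1 :=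
    (hasDerivAt_const _ _).prodMk ((hasDerivAt_id _).prodMk (hasDerivAt_const _ _))
  have := ((hf.differentiable (by simp) p).hasFDerivAt).comp_hasDerivAt p.2.1 hc
  exact this.deriv

lemma pX_pS_comm (f : ℝ × ℝ × ℝ → ℂ) (hf : ContDiff ℝ (⊤ : ℕ∞) f) (p : ℝ × ℝ × ℝ) :
    pX (pS f) p = pS (pX f) p := by
  have hF : ContDiff ℝ (⊤ : ℕ∞) (fderiv ℝ f) := hf.fderiv_right (by simp)
  have hF' : Differentiable ℝ (fderiv ℝ f) := hF.differentiable (by simp)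
  -- pX (pS f) p = f''(e1)(e2)
  have h1 : pX (pS f) p = (fderiv ℝ (fderiv ℝ f) p (1, 0, 0)) (0, 1, 0) := by
    have hfun : pS f = fun z => fderiv ℝ f z (0, 1, 0) := funext fun z => pS_eq_fderiv f hf z
    rw [hfun]
    have hc : HasDerivAt (fun x : ℝ => (x, p.2)) ((1 : ℝ), ((0 : ℝ), (0 : ℝ))) p.1 :=
      (hasDerivAt_id p.1).prodMk (hasDerivAt_const _ _)
    have hcomp : HasDerivAt (fun x : ℝ => fderiv ℝ f (x, p.2))
        (fderiv ℝ (fderiv ℝ f) p ((1 : ℝ), ((0 : ℝ), (0 : ℝ)))) p.1 :=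
      ((hF' p).hasFDerivAt).comp_hasDerivAt p.1 hc
    have happ := ((ContinuousLinearMap.apply ℝ ℂ
      (((0 : ℝ), ((1 : ℝ), (0 : ℝ))) : ℝ × ℝ × ℝ)).hasFDerivAt).comp_hasDerivAt p.1 hcomp
    exact happ.deriv
  have h2 : pS (pX f) p = (fderiv ℝ (fderiv ℝ f) p (0, 1, 0)) (1, 0, 0) := by
    have hfun : pX f = fun z => fderiv ℝ f z (1, 0, 0) := funext fun z => pX_eq_fderiv f hf z
    rw [hfun]
    have hc : HasDerivAt (fun s : ℝ => (p.1, s, p.2.2)) ((0 : ℝ), ((1 : ℝ), (0 : ℝ))) p.2.1 :=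
      (hasDerivAt_const _ _).prodMk ((hasDerivAt_id _).prodMk (hasDerivAt_const _ _))
    have hcomp : HasDerivAt (fun s : ℝ => fderiv ℝ f (p.1, s, p.2.2))
        (fderiv ℝ (fderiv ℝ f) p ((0 : ℝ), ((1 : ℝ), (0 : ℝ)))) p.2.1 :=
      ((hF' p).hasFDerivAt).comp_hasDerivAt p.2.1 hc
    have happ := ((ContinuousLinearMap.apply ℝ ℂ
      (((1 : ℝ), ((0 : ℝ), (0 : ℝ))) : ℝ × ℝ × ℝ)).hasFDerivAt).comp_hasDerivAt p.2.1 hcomp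
    exact happ.deriv
  rw [h1, h2]
  exact (second_derivative_symmetric (fun y => (hf.differentiable (by simp) y).hasFDerivAt)
    (hF' p).hasFDerivAt _ _).symm

theorem stmt_13
    (h : ℝ) (hh : h ≠ 0)
    (q r v : ℤ → ℝ × ℝ × ℝ → ℂ)
    (hq : ∀ n, ContDiff ℝ (⊤ : ℕ∞) (q n)) (hr : ∀ n, ContDiff ℝ (⊤ : ℕ∞) (r n))
    (hv : ∀ n, ContDiff ℝ (⊤ : ℕ∞) (v n))
    (hlat0 : ∀ n p, v n p - v (n - 1) p = -(h : ℂ) * q n p * r (n - 1) p)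
    (hlat1 : ∀ n p, pX (q n) p
        = (q n p - q (n - 1) p) / (h : ℂ) + (h : ℂ) * (q n p) ^ 2 * r (n - 1) p)
    (hlat2 : ∀ n p, pX (r n) p
        = (r (n + 1) p - r n p) / (h : ℂ) - (h : ℂ) * q (n + 1) p * (r n p) ^ 2)
    (hflow1 : ∀ n p, pT (q n) p
        = (Complex.I / 2) * pX (pS (q n)) p + Complex.I * q n p * pS (v n) p)
    (hflow2 : ∀ n p, pT (r n) p
        = -(Complex.I / 2) * pX (pS (r n)) p - Complex.I * r n p * pS (v n) p) :
    (∀ n p, 2 * Complex.I * pT (q n) p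
        = -(1 / (h : ℂ)) * (pS (q n) p - pS (q (n - 1)) p)
          - 2 * (h : ℂ) * q n p * r (n - 1) p * pS (q n) p
          - (h : ℂ) * (q n p) ^ 2 * pS (r (n - 1)) p
          - 2 * q n p * pS (v n) p) ∧
    (∀ n p, 2 * Complex.I * pT (r n) p
        = (1 / (h : ℂ)) * (pS (r (n + 1)) p - pS (r n) p)
          - 2 * (h : ℂ) * q (n + 1) p * r n p * pS (r n) p
          - (h : ℂ) * (r n p) ^ 2 * pS (q (n + 1)) p
          + 2 * r n p * pS (v n) p) ∧
    (∀ n p, pS (v (n + 1)) p - pS (v n) p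
        = -(h : ℂ) * pS (fun z => q (n + 1) z * r n z) p) := by
  -- the s-derivative of the x-derivative of q, computed from hlat1
  have keyq : ∀ n p, pX (pS (q n)) p
      = (pS (q n) p - pS (q (n - 1)) p) / (h : ℂ)
        + ((h : ℂ) * (pS (q n) p * q n p + q n p * pS (q n) p) * r (n - 1) p
          + (h : ℂ) * (q n p * q n p) * pS (r (n - 1)) p) := by
    intro n p
    rw [pX_pS_comm (q n) (hq n) p]
    have hfun : pX (q n) = fun z => (q n z - q (n - 1) z) / (h : ℂ)
        + (h : ℂ) * (q n z * q n z) * r (n - 1) z :=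
      funext fun z => by rw [hlat1 n z]; ring
    rw [hfun]
    have Hq := sliceS_hasDerivAt (q n) (hq n) p
    have Hq' := sliceS_hasDerivAt (q (n - 1)) (hq (n - 1)) p
    have Hr' := sliceS_hasDerivAt (r (n - 1)) (hr (n - 1)) p
    have H := ((Hq.sub Hq').div_const ((h : ℂ))).add
      (((Hq.mul Hq).const_mul ((h : ℂ))).mul Hr')
    exact H.deriv
  have keyr : ∀ n p, pX (pS (r n)) p
      = (pS (r (n + 1)) p - pS (r n) p) / (h : ℂ)
        - ((h : ℂ) * pS (q (n + 1)) p * (r n p * r n p)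
          + (h : ℂ) * q (n + 1) p * (pS (r n) p * r n p + r n p * pS (r n) p)) := by
    intro n p
    rw [pX_pS_comm (r n) (hr n) p]
    have hfun : pX (r n) = fun z => (r (n + 1) z - r n z) / (h : ℂ)
        - (h : ℂ) * q (n + 1) z * (r n z * r n z) :=
      funext fun z => by rw [hlat2 n z]; ring
    rw [hfun]
    have Hr := sliceS_hasDerivAt (r n) (hr n) p
    have Hr1 := sliceS_hasDerivAt (r (n + 1)) (hr (n + 1)) p
    have Hq1 := sliceS_hasDerivAt (q (n + 1)) (hq (n + 1)) p
    have H := ((Hr1.sub Hr).div_const ((h : ℂ))).sub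
      ((Hq1.const_mul ((h : ℂ))).mul (Hr.mul Hr))
    exact H.deriv
  refine ⟨?_, ?_, ?_⟩
  · intro n p
    rw [hflow1 n p, keyq n p]
    have hI := Complex.I_ne_zero
    have hI2 : Complex.I * Complex.I = -1 := Complex.I_mul_I
    field_simp
    ring_nf
    rw [Complex.I_sq]
    ring
  · intro n p
    rw [hflow2 n p, keyr n p]
    field_simp
    ring_nf
    rw [Complex.I_sq]
    ring
  · intro n p
    have Hv1 := sliceS_hasDerivAt (v (n + 1)) (hv (n + 1)) p
    have Hv := sliceS_hasDerivAt (v n) (hv n) p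
    have Hq1 := sliceS_hasDerivAt (q (n + 1)) (hq (n + 1)) p
    have Hrn := sliceS_hasDerivAt (r n) (hr n) p
    have hfun : (fun s => v (n + 1) (p.1, s, p.2.2) - v n (p.1, s, p.2.2))
        = fun s => -(h : ℂ) * (q (n + 1) (p.1, s, p.2.2) * r n (p.1, s, p.2.2)) := by
      funext s
      have := hlat0 (n + 1) (p.1, s, p.2.2)
      simp only [add_sub_cancel_right] at this
      rw [this]; ring
    have H1 : HasDerivAt (fun s => -(h : ℂ) * (q (n + 1) (p.1, s, p.2.2) * r n (p.1, s, p.2.2)))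
        (pS (v (n + 1)) p - pS (v n) p) p.2.1 := by
      rw [← hfun]; exact Hv1.sub Hv
    have H2 := (Hq1.mul Hrn).const_mul (-(h : ℂ))
    have huniq := H1.unique H2
    have hps : pS (fun z => q (n + 1) z * r n z) p
        = pS (q (n + 1)) p * r n p + q (n + 1) p * pS (r n) p := (Hq1.mul Hrn).deriv
    rw [huniq, hps]
end
end
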